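/- For any d×d real symmetric positive definite matrices A, B and C, det(A+B+C) + det(A) ≥ det(A+B) + det(A+C). -/

import Mathlib

/-!
Since `det (X + v vᵀ) = det X · (1 + vᵀ X⁻¹ v)`, and similarly for rank-two updates, the
inequality for rank-one `Y = a aᵀ`, `Z = b bᵀ` reads `det X · ((aᵀX⁻¹b)² - (aᵀX⁻¹a)(bᵀX⁻¹b)) ≤ 0`,
which is Cauchy–Schwarz for the inner product given by `X⁻¹`. Writing positive semidefinite
matrices as sums of rank-one ones, the general case follows by telescoping, first in `Y` and then
in `Z`, since `X` stays positive definite along the way.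
-/

open Matrix

theorem Finset.add_sum_add_le_of_forall_add_le {ι M α : Type*} [AddCommMonoid M]
    [AddCommGroup α] [PartialOrder α] [IsOrderedAddMonoid α]
    {f : M → α} {P : M → Prop} {y : ι → M} {Z : M}
    (hP : ∀ X i, P X → P (X + y i))
    (hf : ∀ X i, P X → f (X + y i) + f (X + Z) ≤ f (X + y i + Z) + f X)
    (s : Finset ι) {X : M} (hX : P X) :
    f (X + ∑ i ∈ s, y i) + f (X + Z) ≤ f (X + ∑ i ∈ s, y i + Z) + f X := by
  induction s using Finset.cons_induction generalizing X with
  | empty => simp only [Finset.sum_empty, add_zero, add_comm, le_refl]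
  | cons i s hi ih =>
    have step := hf X i hX
    have rest := ih (hP X i hX)
    simp only [Finset.sum_cons, ← add_assoc] at rest ⊢
    rw [← add_le_add_iff_right (f (X + y i + Z) + f (X + y i))]
    calc _ = (f (X + y i + ∑ j ∈ s, y j) + f (X + y i + Z)) + (f (X + y i) + f (X + Z)) := by abel
      _ ≤ (f (X + y i + ∑ j ∈ s, y j + Z) + f (X + y i)) + (f (X + y i + Z) + f X) :=
        add_le_add rest step
      _ = _ := by abel

namespace Matrix

variable {n : Type*} [Fintype n]

theorem IsSymm.dotProduct_mulVec_comm {R : Type*} [CommSemiring R] {M : Matrix n n R}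
    (hM : M.IsSymm) (x y : n → R) : x ⬝ᵥ M *ᵥ y = y ⬝ᵥ M *ᵥ x := by
  rw [dotProduct_mulVec, ← mulVec_transpose, hM.eq, dotProduct_comm]

theorem PosSemidef.dotProduct_mulVec_mul_self_le {M : Matrix n n ℝ} (hM : M.PosSemidef)
    (x y : n → ℝ) : (x ⬝ᵥ M *ᵥ y) * (x ⬝ᵥ M *ᵥ y) ≤ (x ⬝ᵥ M *ᵥ x) * (y ⬝ᵥ M *ᵥ y) := by
  let _ := M.toSeminormedAddCommGroup hM
  let _ := M.toInnerProductSpace hM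
  have h := real_inner_mul_inner_self_le x y
  change (M *ᵥ y) ⬝ᵥ star x * ((M *ᵥ y) ⬝ᵥ star x) ≤
    (M *ᵥ x) ⬝ᵥ star x * ((M *ᵥ y) ⬝ᵥ star y) at h
  simpa only [star_trivial, dotProduct_comm _ y, dotProduct_comm _ x, mul_comm (y ⬝ᵥ _)] using h

theorem of_mul_mul_transpose_of_apply {m R : Type*} [Fintype m] [CommSemiring R]
    (u : m → n → R) (N : Matrix n n R) (w : m → n → R) (j k : m) :
    (of u * N * (of w)ᵀ) j k = u j ⬝ᵥ N *ᵥ w k := by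
  rw [Matrix.mul_assoc, mul_apply, dotProduct]
  simp [mul_apply, mulVec, dotProduct, Finset.mul_sum]

theorem posSemidef_vecMulVec_self (w : n → ℝ) : (vecMulVec w w).PosSemidef := by
  simpa using posSemidef_vecMulVec_self_star w

variable [DecidableEq n]

theorem det_add_vecMulVec_add_vecMulVec {R : Type*} [CommRing R] {X : Matrix n n R}
    (hX : IsUnit X.det) (a b c e : n → R) :
    (X + vecMulVec a b + vecMulVec c e).det =
      X.det * ((1 + b ⬝ᵥ X⁻¹ *ᵥ a) * (1 + e ⬝ᵥ X⁻¹ *ᵥ c) -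
        (b ⬝ᵥ X⁻¹ *ᵥ c) * (e ⬝ᵥ X⁻¹ *ᵥ a)) := by
  have hUV : (of ![a, c])ᵀ * of ![b, e] = vecMulVec a b + vecMulVec c e := by
    ext i k
    simp [Matrix.mul_apply, Fin.sum_univ_two, vecMulVec_apply, transpose_apply]
  rw [add_assoc, ← hUV, det_add_mul _ _ hX, det_fin_two]
  simp only [add_apply, of_mul_mul_transpose_of_apply]
  simp

theorem det_add_vecMulVec {R : Type*} [CommRing R] {X : Matrix n n R}
    (hX : IsUnit X.det) (a b : n → R) :
    (X + vecMulVec a b).det = X.det * (1 + b ⬝ᵥ X⁻¹ *ᵥ a) := by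
  simpa using det_add_vecMulVec_add_vecMulVec hX a b 0 0

end Matrix

namespace Matrix.PosDef

variable {n : Type*} [Fintype n] [DecidableEq n] {X : Matrix n n ℝ}

theorem det_add_vecMulVec_add_det_add_vecMulVec_le (hX : X.PosDef) (a b : n → ℝ) :
    (X + vecMulVec a a).det + (X + vecMulVec b b).det ≤
      (X + vecMulVec a a + vecMulVec b b).det + X.det := by
  have hunit : IsUnit X.det := hX.det_pos.ne'.isUnit
  have hsymm : X⁻¹.IsSymm := by
    simpa [IsHermitian, IsSymm] using hX.inv.isHermitian
  have cauchy_schwarz := hX.inv.posSemidef.dotProduct_mulVec_mul_self_le a b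
  rw [det_add_vecMulVec_add_vecMulVec hunit, det_add_vecMulVec hunit, det_add_vecMulVec hunit,
    hsymm.dotProduct_mulVec_comm b a]
  nlinarith [mul_nonneg hX.det_pos.le (sub_nonneg.2 cauchy_schwarz)]

theorem det_add_add_det_add_vecMulVec_le (hX : X.PosDef) {Y : Matrix n n ℝ} (hY : Y.PosSemidef)
    (v : n → ℝ) :
    (X + Y).det + (X + vecMulVec v v).det ≤ (X + Y + vecMulVec v v).det + X.det := by
  obtain ⟨m, w, rfl⟩ := posSemidef_iff_eq_sum_vecMulVec.mp hY
  simp only [star_trivial]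
  exact Finset.add_sum_add_le_of_forall_add_le (P := PosDef)
    (fun X i hX => hX.add_posSemidef (posSemidef_vecMulVec_self (w i)))
    (fun X i hX => hX.det_add_vecMulVec_add_det_add_vecMulVec_le (w i) v) _ hX

theorem det_add_add_det_add_le (hX : X.PosDef) {Y Z : Matrix n n ℝ} (hY : Y.PosSemidef)
    (hZ : Z.PosSemidef) : (X + Y).det + (X + Z).det ≤ (X + Y + Z).det + X.det := by
  obtain ⟨m, w, rfl⟩ := posSemidef_iff_eq_sum_vecMulVec.mp hZ
  simp only [star_trivial]
  rw [add_comm (X + Y).det, add_right_comm X Y]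
  exact Finset.add_sum_add_le_of_forall_add_le (P := PosDef)
    (fun X i hX => hX.add_posSemidef (posSemidef_vecMulVec_self (w i)))
    (fun X i hX => by
      rw [add_comm (X + _).det, add_right_comm X (vecMulVec _ _)]
      exact hX.det_add_add_det_add_vecMulVec_le hY (w i)) _ hX

end Matrix.PosDef

theorem stmt8_general (d : ℕ) (A B C : Matrix (Fin d) (Fin d) ℝ)
    (hA : A.PosDef) (hB : B.PosDef) (hC : C.PosDef) :
    (A + B).det + (A + C).det ≤ (A + B + C).det + A.det :=
  hA.det_add_add_det_add_le hB.posSemidef hC.posSemidef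

/-- For any d×d real symmetric positive definite matrices `A, B, C`,
`det(A+B+C) + det(A) ≥ det(A+B) + det(A+C)`. -/
theorem stmt8 (d : ℕ) (A B C : Matrix (Fin d) (Fin d) ℝ)
    (hAs : A.IsSymm) (hBs : B.IsSymm) (hCs : C.IsSymm)
    (hA : A.PosDef) (hB : B.PosDef) (hC : C.PosDef) :
    (A + B).det + (A + C).det ≤ (A + B + C).det + A.det :=
  stmt8_general d A B C hA hB hC
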